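/- For each n ≥ 1, the CTL formula φ over {AG, AX} implementing an n-bit binary counter (with carry, reset, and store auxiliary propositions) has length O(n), is satisfiable, and every serial model of φ has extent at least 2ⁿ − 1, i.e., contains a simple path through at least 2ⁿ distinct worlds. -/

import Mathlib

/-! Atom `i < n` is bit `i` of a counter and atom `n + i` the carry into bit `i`; under `AG`, the
carries are forced to mean "all lower bits are set" and every successor must hold
`bit i xor carry i`, which is exactly the binary increment. Along any path from a world where
all bits are off, the `k`-th world therefore holds `k` in binary, so the first `2ⁿ` worlds are
distinct. The successor relation on `ℕ`, with the true bits and carries, is a model. -/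

def Serial {W : Type} (R : W → W → Prop) : Prop := ∀ w, ∃ u, R w u

def IsPath {W : Type} (R : W → W → Prop) (π : ℕ → W) : Prop := ∀ i, R (π i) (π (i+1))

structure Kripke (W : Type) where
  R : W → W → Prop
  V : ℕ → W → Prop

inductive CTL where
  | atom : ℕ → CTL
  | neg  : CTL → CTL
  | and  : CTL → CTL → CTL
  | or   : CTL → CTL → CTL
  | AX : CTL → CTL
  | EX : CTL → CTL
  | AF : CTL → CTL
  | EF : CTL → CTL
  | AG : CTL → CTL
  | EG : CTL → CTL
  | AU : CTL → CTL → CTL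
  | EU : CTL → CTL → CTL
  | AR : CTL → CTL → CTL
  | ER : CTL → CTL → CTL
deriving DecidableEq

def sat {W : Type} (K : Kripke W) : CTL → W → Prop
  | .atom p, w => K.V p w
  | .neg φ, w => ¬ sat K φ w
  | .and φ ψ, w => sat K φ w ∧ sat K ψ w
  | .or φ ψ, w => sat K φ w ∨ sat K ψ w
  | .AX φ, w => ∀ π : ℕ → W, IsPath K.R π → π 0 = w → sat K φ (π 1)
  | .EX φ, w => ∃ π : ℕ → W, IsPath K.R π ∧ π 0 = w ∧ sat K φ (π 1)
  | .AF φ, w => ∀ π : ℕ → W, IsPath K.R π → π 0 = w → ∃ i, sat K φ (π i)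
  | .EF φ, w => ∃ π : ℕ → W, IsPath K.R π ∧ π 0 = w ∧ ∃ i, sat K φ (π i)
  | .AG φ, w => ∀ π : ℕ → W, IsPath K.R π → π 0 = w → ∀ i, sat K φ (π i)
  | .EG φ, w => ∃ π : ℕ → W, IsPath K.R π ∧ π 0 = w ∧ ∀ i, sat K φ (π i)
  | .AU φ ψ, w => ∀ π : ℕ → W, IsPath K.R π → π 0 = w →
      ∃ i, sat K ψ (π i) ∧ ∀ j, j < i → sat K φ (π j)
  | .EU φ ψ, w => ∃ π : ℕ → W, IsPath K.R π ∧ π 0 = w ∧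
      ∃ i, sat K ψ (π i) ∧ ∀ j, j < i → sat K φ (π j)
  | .AR φ ψ, w => ∀ π : ℕ → W, IsPath K.R π → π 0 = w →
      ∀ i, sat K ψ (π i) ∨ ∃ j, j < i ∧ sat K φ (π j)
  | .ER φ ψ, w => ∃ π : ℕ → W, IsPath K.R π ∧ π 0 = w ∧
      ∀ i, sat K ψ (π i) ∨ ∃ j, j < i ∧ sat K φ (π j)

def CTL.len : CTL → ℕ
  | .atom _ => 1
  | .neg φ => φ.len + 1
  | .and φ ψ => φ.len + ψ.len + 1
  | .or φ ψ => φ.len + ψ.len + 1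
  | .AX φ => φ.len + 1
  | .EX φ => φ.len + 1
  | .AF φ => φ.len + 1
  | .EF φ => φ.len + 1
  | .AG φ => φ.len + 1
  | .EG φ => φ.len + 1
  | .AU φ ψ => φ.len + ψ.len + 1
  | .EU φ ψ => φ.len + ψ.len + 1
  | .AR φ ψ => φ.len + ψ.len + 1
  | .ER φ ψ => φ.len + ψ.len + 1

def CTL.td : CTL → ℕ
  | .atom _ => 0
  | .neg φ => φ.td
  | .and φ ψ => max φ.td ψ.td
  | .or φ ψ => max φ.td ψ.td
  | .AX φ => φ.td + 1
  | .EX φ => φ.td + 1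
  | .AF φ => φ.td + 1
  | .EF φ => φ.td + 1
  | .AG φ => φ.td + 1
  | .EG φ => φ.td + 1
  | .AU φ ψ => max φ.td ψ.td + 1
  | .EU φ ψ => max φ.td ψ.td + 1
  | .AR φ ψ => max φ.td ψ.td + 1
  | .ER φ ψ => max φ.td ψ.td + 1

/-- The formula uses only the temporal operators `AG` and `AX` (and their duals
`EF` and `EX`). -/
def OnlyAGAX : CTL → Prop
  | .atom _ => True
  | .neg φ => OnlyAGAX φ
  | .and φ ψ => OnlyAGAX φ ∧ OnlyAGAX ψ
  | .or φ ψ => OnlyAGAX φ ∧ OnlyAGAX ψ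
  | .AX φ => OnlyAGAX φ
  | .EX φ => OnlyAGAX φ
  | .AG φ => OnlyAGAX φ
  | .EF φ => OnlyAGAX φ
  | _ => False

theorem Nat.testBit_add_one_iff (k i : ℕ) :
    (k + 1).testBit i = true ↔ (k.testBit i = true ↔ ¬ ∀ j < i, k.testBit j = true) := by
  induction i generalizing k with
  | zero => simp only [Nat.testBit_zero, decide_eq_true_eq, Nat.not_lt_zero, false_implies,
      implies_true, not_true_eq_false, iff_false]; omega
  | succ i ih =>
    rw [Nat.testBit_add_one, Nat.testBit_add_one, Nat.forall_lt_succ_left]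
    simp only [← Nat.testBit_div_two, Nat.testBit_zero, decide_eq_true_eq]
    rcases Nat.mod_two_eq_zero_or_one k with h | h
    · rw [show (k + 1) / 2 = k / 2 by omega]
      simp [h]
    · rw [show (k + 1) / 2 = k / 2 + 1 by omega, ih]
      simp [h]

theorem Serial.exists_isPath {W : Type} {R : W → W → Prop} (hR : Serial R) (w : W) :
    ∃ π : ℕ → W, IsPath R π ∧ π 0 = w := by
  choose f hf using hR
  exact ⟨fun k => f^[k] w, fun k => by simpa [Function.iterate_succ_apply'] using hf _, rfl⟩

namespace CTL

def imp (φ ψ : CTL) : CTL := .or (.neg φ) ψ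

def iff (φ ψ : CTL) : CTL := .and (φ.imp ψ) (ψ.imp φ)

def top : CTL := .or (.atom 0) (.neg (.atom 0))

def conjRange (f : ℕ → CTL) : ℕ → CTL
  | 0 => top
  | k + 1 => .and (conjRange f k) (f k)

def nextIff (φ ψ : CTL) : CTL := .and (ψ.imp φ.AX) (ψ.neg.imp φ.neg.AX)

theorem len_conjRange {f : ℕ → CTL} {c : ℕ} (hf : ∀ i, (f i).len = c) (k : ℕ) :
    (conjRange f k).len = (c + 1) * k + 4 := by
  induction k with
  | zero => rfl
  | succ k ih => simp only [conjRange, len, ih, hf]; ring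

theorem onlyAGAX_conjRange {f : ℕ → CTL} (hf : ∀ i, OnlyAGAX (f i)) (k : ℕ) :
    OnlyAGAX (conjRange f k) := by
  induction k with
  | zero => exact ⟨trivial, trivial⟩
  | succ k ih => exact ⟨ih, hf k⟩

section Semantics

variable {W : Type} {K : Kripke W} {φ ψ : CTL} {w : W}

@[simp] theorem sat_imp : sat K (φ.imp ψ) w ↔ (sat K φ w → sat K ψ w) := by
  simp only [imp, sat]; tauto

@[simp] theorem sat_iff : sat K (φ.iff ψ) w ↔ (sat K φ w ↔ sat K ψ w) := by
  simp only [iff, sat_imp, sat]; tauto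

@[simp] theorem sat_conjRange {f : ℕ → CTL} {k : ℕ} :
    sat K (conjRange f k) w ↔ ∀ i < k, sat K (f i) w := by
  induction k with
  | zero => simpa [conjRange, top, sat] using em _
  | succ k ih => simp only [conjRange, sat, ih, Nat.forall_lt_succ_right]

theorem sat_AX_of_forall (h : ∀ u, K.R w u → sat K φ u) : sat K φ.AX w := by
  rintro π hπ rfl
  exact h _ (hπ 0)

theorem sat_AG_of_forall (h : ∀ u, sat K φ u) : sat K φ.AG w :=
  fun π _ _ i => h (π i)

theorem sat_nextIff_of_forall (h : ∀ u, K.R w u → (sat K φ u ↔ sat K ψ w)) :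
    sat K (nextIff φ ψ) w :=
  ⟨sat_imp.2 fun hψ => sat_AX_of_forall fun u hu => (h u hu).2 hψ,
    sat_imp.2 fun hψ => sat_AX_of_forall fun u hu => mt (h u hu).1 hψ⟩

end Semantics

end CTL

namespace IsPath

open CTL

variable {W : Type} {K : Kripke W} {π : ℕ → W} {φ ψ : CTL}

theorem sat_of_sat_AG (hπ : IsPath K.R π) (h : sat K φ.AG (π 0)) (k : ℕ) : sat K φ (π k) :=
  h π hπ rfl k

theorem sat_succ_of_sat_AX (hπ : IsPath K.R π) {k : ℕ} (h : sat K φ.AX (π k)) :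
    sat K φ (π (k + 1)) :=
  h (fun j => π (k + j)) (fun j => hπ (k + j)) rfl

theorem sat_succ_iff_of_sat_nextIff (hπ : IsPath K.R π) {k : ℕ}
    (h : sat K (nextIff φ ψ) (π k)) : sat K φ (π (k + 1)) ↔ sat K ψ (π k) :=
  ⟨fun hφ => by_contra fun hψ => hπ.sat_succ_of_sat_AX (sat_imp.1 h.2 hψ) hφ,
    fun hψ => hπ.sat_succ_of_sat_AX (sat_imp.1 h.1 hψ)⟩

end IsPath

theorem iff_forall_lt_of_succ_iff_and {c p : ℕ → Prop} {n : ℕ} (h0 : c 0)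
    (hsucc : ∀ i < n, (c (i + 1) ↔ c i ∧ p i)) : ∀ i ≤ n, (c i ↔ ∀ j < i, p j) := by
  intro i hi
  induction i with
  | zero => simpa using h0
  | succ i ih => rw [hsucc i hi, ih (by omega), Nat.forall_lt_succ_right]

namespace BinaryCounter

open CTL

def bit (i : ℕ) : CTL := .atom i

def carry (n i : ℕ) : CTL := .atom (n + i)

def carryStep (n i : ℕ) : CTL := (carry n (i + 1)).iff ((carry n i).and (bit i))

def bitStep (n i : ℕ) : CTL := nextIff (bit i) ((bit i).iff (carry n i).neg)

def axioms (n : ℕ) : CTL :=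
  (carry n 0).and (conjRange (fun i => (carryStep n i).and (bitStep n i)) n)

def formula (n : ℕ) : CTL := (axioms n).AG.and (conjRange (fun i => (bit i).neg) n)

theorem len_formula (n : ℕ) : (formula n).len = 51 * n + 12 := by
  rw [formula, axioms, len, len, len, len_conjRange (c := 47) (fun _ => rfl),
    len_conjRange (c := 2) (fun _ => rfl)]
  simp only [carry, len]
  ring

theorem onlyAGAX_formula (n : ℕ) : OnlyAGAX (formula n) :=
  ⟨⟨trivial, onlyAGAX_conjRange (fun _ => by simp [carryStep, bitStep, nextIff, CTL.iff, imp,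
    carry, bit, OnlyAGAX]) n⟩, onlyAGAX_conjRange (fun _ => by trivial) n⟩

section LowerBound

variable {W : Type} {K : Kripke W} {n : ℕ}

theorem carry_iff_of_sat_axioms {w : W} (h : sat K (axioms n) w) {i : ℕ} (hi : i < n) :
    K.V (n + i) w ↔ ∀ j < i, K.V j w := by
  obtain ⟨h0, hsteps⟩ := h
  refine iff_forall_lt_of_succ_iff_and (c := fun i => K.V (n + i) w) h0 (fun i hi => ?_) i hi.le
  exact sat_iff.1 (sat_conjRange.1 hsteps i hi).1

theorem bit_succ_iff_of_sat_axioms {π : ℕ → W} (hπ : IsPath K.R π) {k : ℕ}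
    (h : sat K (axioms n) (π k)) {i : ℕ} (hi : i < n) :
    K.V i (π (k + 1)) ↔ (K.V i (π k) ↔ ¬ ∀ j < i, K.V j (π k)) := by
  rw [← carry_iff_of_sat_axioms h hi]
  exact (hπ.sat_succ_iff_of_sat_nextIff (sat_conjRange.1 h.2 i hi).2).trans sat_iff

theorem bit_iff_testBit {π : ℕ → W} (hπ : IsPath K.R π) (h : sat K (formula n) (π 0))
    (k : ℕ) : ∀ i < n, K.V i (π k) ↔ k.testBit i = true := by
  induction k with
  | zero => intro i hi; simpa [bit, sat] using sat_conjRange.1 h.2 i hi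
  | succ k ih =>
    intro i hi
    rw [bit_succ_iff_of_sat_axioms hπ (hπ.sat_of_sat_AG h.1 k) hi, ih i hi,
      Nat.testBit_add_one_iff]
    exact iff_congr Iff.rfl (not_congr (forall₂_congr fun j hj => ih j (hj.trans hi)))

theorem injOn_of_sat_formula {π : ℕ → W} (hπ : IsPath K.R π) (h : sat K (formula n) (π 0)) :
    Set.InjOn π (Set.Iio (2 ^ n)) := by
  intro a ha b hb hab
  refine Nat.eq_of_testBit_eq fun i => ?_
  by_cases hi : i < n
  · rw [Bool.eq_iff_iff, ← bit_iff_testBit hπ h a i hi, ← bit_iff_testBit hπ h b i hi, hab]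
  · have hle : 2 ^ n ≤ 2 ^ i := Nat.pow_le_pow_right two_pos (not_lt.1 hi)
    rw [Nat.testBit_lt_two_pow (lt_of_lt_of_le ha hle),
      Nat.testBit_lt_two_pow (lt_of_lt_of_le hb hle)]

end LowerBound

/-- The values of atoms beyond `2 * n`, which the formula never mentions, are junk. -/
def model (n : ℕ) : Kripke ℕ where
  R k l := l = k + 1
  V i k := if i < n then k.testBit i = true else ∀ j < i - n, k.testBit j = true

theorem model_V_of_lt {n i : ℕ} (hi : i < n) (k : ℕ) :
    (model n).V i k ↔ k.testBit i = true := by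
  simp [model, hi]

theorem model_V_add (n i k : ℕ) : (model n).V (n + i) k ↔ ∀ j < i, k.testBit j = true := by
  simp [model]

theorem sat_axioms_model (n k : ℕ) : sat (model n) (axioms n) k := by
  refine ⟨(model_V_add n 0 k).2 (by simp), sat_conjRange.2 fun i hi => ⟨?_, ?_⟩⟩
  · simp only [carryStep, carry, bit, sat_iff, sat, model_V_add, model_V_of_lt hi,
      Nat.forall_lt_succ_right]
  · refine sat_nextIff_of_forall ?_
    rintro _ rfl
    simp only [bit, carry, sat_iff, sat, model_V_add, model_V_of_lt hi, Nat.testBit_add_one_iff]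

theorem sat_formula_model (n : ℕ) : sat (model n) (formula n) 0 :=
  ⟨sat_AG_of_forall (sat_axioms_model n),
    sat_conjRange.2 fun i hi => by simp [bit, sat, model_V_of_lt hi]⟩

end BinaryCounter

/-- For each `n ≥ 1` there is a satisfiable CTL formula over `{AG, AX}` of length
`O(n)` (the `n`-bit binary-counter formula with carry, reset and store propositions)
such that every rooted serial model has extent at least `2ⁿ − 1`: some path from the
root visits at least `2ⁿ` distinct worlds. -/
theorem binary_counter_extent_lower_bound :
    ∃ C : ℕ, 0 < C ∧ ∀ n : ℕ, 1 ≤ n → ∃ φ : CTL,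
      OnlyAGAX φ ∧ φ.len ≤ C * n ∧
      (∃ (W : Type) (K : Kripke W) (w : W), Serial K.R ∧ sat K φ w) ∧
      (∀ (W : Type) (K : Kripke W) (w : W), Serial K.R → sat K φ w →
        ∃ π : ℕ → W, IsPath K.R π ∧ π 0 = w ∧
          ∃ f : Fin (2 ^ n) → ℕ, Function.Injective (fun i => π (f i))) := by
  refine ⟨63, by norm_num, fun n hn => ⟨BinaryCounter.formula n, ?_, ?_, ?_, ?_⟩⟩
  · exact BinaryCounter.onlyAGAX_formula n
  · rw [BinaryCounter.len_formula]; omega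
  · exact ⟨ℕ, BinaryCounter.model n, 0, fun k => ⟨k + 1, rfl⟩,
      BinaryCounter.sat_formula_model n⟩
  · intro W K w hK hw
    obtain ⟨π, hπ, rfl⟩ := hK.exists_isPath w
    have hinj := BinaryCounter.injOn_of_sat_formula hπ hw
    exact ⟨π, hπ, rfl, Fin.val, fun a b hab => Fin.ext (hinj a.isLt b.isLt hab)⟩
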